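/- Correctness of the Landau–Vishkin frontier recurrence: fix t ≥ 1 and an integer diagonal i with |i| ≤ t and −m ≤ i ≤ n. Consider the candidate values c₁ = f(t−1, i+1) (applicable when |i+1| ≤ t−1 and i+1 ≤ n), c₂ = f(t−1, i−1) + 1 (applicable when |i−1| ≤ t−1 and i−1 ≥ −m), and c₃ = f(t−1, i) + 1 (applicable when |i| ≤ t−1). At least one candidate is applicable; let g = min( min(n, m+i), max of the applicable candidates ). Then S_t(i) is nonempty and f(t,i) = g + lcp(A.drop g, B.drop (g−i)). That is, the frontier of edit distance t on diagonal i is obtained by taking the farthest cell reachable in one unit-cost step from the three neighboring frontiers of distance t−1 and then sliding along the longest common prefix of the remaining suffixes. -/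

import Mathlib

/-- Costs for Levenshtein edit distance (removed from Mathlib; restored with its old definition). -/
structure Levenshtein.Cost (α β δ : Type*) where
  delete : α → δ
  insert : β → δ
  substitute : α → β → δ

/-- The default unit costs (as in the old Mathlib). -/
def Levenshtein.defaultCost {α : Type*} [DecidableEq α] : Levenshtein.Cost α α ℕ where
  delete _ := 1
  insert _ := 1
  substitute a b := if a = b then 0 else 1

/-- Step of the Levenshtein dynamic program (as in the old Mathlib). -/
def Levenshtein.impl {α β δ : Type*} [AddZeroClass δ] [Min δ] (C : Levenshtein.Cost α β δ)
    (xs : List α) (y : β) (d : {r : List δ // 0 < r.length}) : {r : List δ // 0 < r.length} :=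
  let ⟨ds, w⟩ := d
  xs.zip (ds.zip ds.tail) |>.foldr
    (init := ⟨[C.insert y + ds.getLast (List.length_pos_iff.mp w)], by simp⟩)
    (fun ⟨x, d₀, d₁⟩ ⟨r, w⟩ =>
      ⟨min (C.delete x + r[0]'w) (min (C.insert y + d₀) (C.substitute x y + d₁)) :: r, by simp⟩)

/-- Edit distances of all suffixes of `xs` to `ys` (as in the old Mathlib). -/
def suffixLevenshtein {α β δ : Type*} [AddZeroClass δ] [Min δ] (C : Levenshtein.Cost α β δ)
    (xs : List α) (ys : List β) : {r : List δ // 0 < r.length} :=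
  ys.foldr
    (Levenshtein.impl C xs)
    (xs.foldr (init := ⟨[0], by simp⟩) (fun a ⟨r, w⟩ => ⟨(C.delete a + r[0]'w) :: r, by simp⟩))

/-- The Levenshtein edit distance (as in the old Mathlib). -/
def levenshtein {α β δ : Type*} [AddZeroClass δ] [Min δ] (C : Levenshtein.Cost α β δ)
    (xs : List α) (ys : List β) : δ :=
  let ⟨r, w⟩ := suffixLevenshtein C xs ys
  r[0]'w

/-- The unit-cost Levenshtein edit distance. -/
def editDist {α : Type*} [DecidableEq α] (A B : List α) : ℕ :=
  levenshtein Levenshtein.defaultCost A B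

/-- The longest-common-prefix length: the largest `l ≤ min(|A|, |B|)`
with `A.take l = B.take l`. -/
def lcp {α : Type*} [DecidableEq α] (A B : List α) : ℕ :=
  Nat.findGreatest (fun l => A.take l = B.take l) (min A.length B.length)

/-- `S_t(i)`: the set of points `x` in the domain of diagonal `i` whose prefix edit distance
`d_i(x) = d(A.take x, B.take (x - i))` is at most `t`. -/
def diagSet {α : Type*} [DecidableEq α] (A B : List α) (t : ℕ) (i : ℤ) : Set ℤ :=
  {x | max 0 i ≤ x ∧ x ≤ min (A.length : ℤ) ((B.length : ℤ) + i) ∧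
    editDist (A.take x.toNat) (B.take (x - i).toNat) ≤ t}

/-!
A cell of diagonal `i` at distance `≤ t` is entered by a last edit from a cell at distance
`≤ t - 1` on diagonal `i + 1`, `i - 1` or `i`, or by a match from the previous cell of diagonal
`i`. So `g`, the farthest one-step successor of the three `(t - 1)`-frontiers (clipped to the
diagonal), has distance `≤ t`, and matches carry this on for `lcp` further cells. Beyond `g` no
cell has a predecessor at distance `≤ t - 1`, so cells at distance `≤ t` there are entered by
matches only, and the first mismatch ends `S_t(i)`. Both directions use the Levenshtein
recurrence at the right ends of the two lists, which is derived from the left-end recurrence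
defining `levenshtein`.
-/

section Levenshtein

variable {α β δ : Type*} [AddZeroClass δ] [Min δ] (C : Levenshtein.Cost α β δ)

theorem Levenshtein.impl_cons_tail (x : α) (xs : List α) (y : β)
    (d : {r : List δ // 0 < r.length}) (h : 0 < d.1.tail.length) :
    (impl C (x :: xs) y d).1.tail = (impl C xs y ⟨d.1.tail, h⟩).1 := by
  obtain ⟨_ | ⟨d₀, _ | ⟨d₁, ds⟩⟩, w⟩ := d
  · simp at w
  · simp at h
  · rfl

theorem Levenshtein.impl_cons_head (x : α) (xs : List α) (y : β)
    (d : {r : List δ // 0 < r.length}) (h : 0 < d.1.tail.length) :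
    (impl C (x :: xs) y d).1[0]'(impl C (x :: xs) y d).2 =
      min (C.delete x + (impl C xs y ⟨d.1.tail, h⟩).1[0]'(impl C xs y ⟨d.1.tail, h⟩).2)
        (min (C.insert y + d.1[0]'d.2) (C.substitute x y + d.1.tail[0]'h)) := by
  obtain ⟨_ | ⟨d₀, _ | ⟨d₁, ds⟩⟩, w⟩ := d
  · simp at w
  · simp at h
  · rfl

theorem suffixLevenshtein_cons_tail (x : α) (xs : List α) (ys : List β) :
    (suffixLevenshtein C (x :: xs) ys).1.tail = (suffixLevenshtein C xs ys).1 := by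
  induction ys with
  | nil => rfl
  | cons y ys ih =>
    have h : 0 < (suffixLevenshtein C (x :: xs) ys).1.tail.length := by
      rw [ih]; exact (suffixLevenshtein C xs ys).2
    have e : (⟨_, h⟩ : {r : List δ // 0 < r.length}) = suffixLevenshtein C xs ys :=
      Subtype.ext ih
    exact (Levenshtein.impl_cons_tail C x xs y _ h).trans (by rw [e]; rfl)

theorem suffixLevenshtein_nil (ys : List β) :
    ∃ d, (suffixLevenshtein C ([] : List α) ys).1 = [d] := by
  cases ys <;> exact ⟨_, rfl⟩

theorem levenshtein_nil_nil : levenshtein C ([] : List α) ([] : List β) = 0 := rfl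

theorem levenshtein_cons_nil (x : α) (xs : List α) :
    levenshtein C (x :: xs) ([] : List β) = C.delete x + levenshtein C xs [] := rfl

theorem levenshtein_nil_cons (y : β) (ys : List β) :
    levenshtein C ([] : List α) (y :: ys) = C.insert y + levenshtein C [] ys := by
  obtain ⟨d, hd⟩ := suffixLevenshtein_nil (α := α) C ys
  have getLast_eq_getElem_zero :
      ∀ (l : List δ) (h₁ : l ≠ []) (h₂ : 0 < l.length), l = [d] →
        l.getLast h₁ = l[0]'h₂ := by
    rintro _ _ _ rfl; rfl
  exact congrArg (C.insert y + ·) (getLast_eq_getElem_zero _ _ _ hd)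

theorem levenshtein_cons_cons (x : α) (xs : List α) (y : β) (ys : List β) :
    levenshtein C (x :: xs) (y :: ys) =
      min (C.delete x + levenshtein C xs (y :: ys))
        (min (C.insert y + levenshtein C (x :: xs) ys)
          (C.substitute x y + levenshtein C xs ys)) := by
  have h : 0 < (suffixLevenshtein C (x :: xs) ys).1.tail.length := by
    rw [suffixLevenshtein_cons_tail]; exact (suffixLevenshtein C xs ys).2
  have e : (⟨_, h⟩ : {r : List δ // 0 < r.length}) = suffixLevenshtein C xs ys :=
    Subtype.ext (suffixLevenshtein_cons_tail C x xs ys)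
  have head := Levenshtein.impl_cons_head C x xs y (suffixLevenshtein C (x :: xs) ys) h
  rw [e] at head
  have getElem_zero_eq : ∀ (l : List δ) (hl : 0 < l.length),
      l = (suffixLevenshtein C xs ys).1 → l[0]'hl = levenshtein C xs ys := by
    rintro l hl rfl; rfl
  exact head.trans (by rw [getElem_zero_eq _ h (suffixLevenshtein_cons_tail C x xs ys)]; rfl)

end Levenshtein

section editDist

variable {α : Type*} [DecidableEq α]

@[simp] theorem editDist_nil_right (X : List α) : editDist X [] = X.length := by
  induction X with
  | nil => rfl
  | cons x X ih =>
    simp only [editDist, levenshtein_cons_nil, Levenshtein.defaultCost, List.length_cons] at ih ⊢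
    omega

@[simp] theorem editDist_nil_left (Y : List α) : editDist [] Y = Y.length := by
  induction Y with
  | nil => rfl
  | cons y Y ih =>
    simp only [editDist, levenshtein_nil_cons, Levenshtein.defaultCost, List.length_cons] at ih ⊢
    omega

theorem editDist_cons_cons (x y : α) (X Y : List α) :
    editDist (x :: X) (y :: Y) =
      min (min (editDist X (y :: Y) + 1) (editDist (x :: X) Y + 1))
        (editDist X Y + if x = y then 0 else 1) := by
  simp only [editDist, levenshtein_cons_cons, Levenshtein.defaultCost]
  omega

theorem editDist_comm (X Y : List α) : editDist X Y = editDist Y X := by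
  induction X generalizing Y with
  | nil => simp
  | cons x X ihX =>
    induction Y with
    | nil => simp
    | cons y Y ihY =>
      rw [editDist_cons_cons, editDist_cons_cons, ihX, ihX, ← ihY]
      simp only [eq_comm (a := x)]
      omega

/-- `levenshtein` recurses on the heads of the two lists; this is the same recurrence on their
last elements. -/
theorem editDist_append_singleton_append_singleton (X Y : List α) (a b : α) :
    editDist (X ++ [a]) (Y ++ [b]) =
      min (min (editDist X (Y ++ [b]) + 1) (editDist (X ++ [a]) Y + 1))
        (editDist X Y + if a = b then 0 else 1) := by
  induction X generalizing Y with
  | nil =>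
    induction Y with
    | nil => simp [editDist_cons_cons]
    | cons y Y ihY =>
      simp only [List.nil_append, List.cons_append] at ihY ⊢
      rw [editDist_cons_cons, editDist_cons_cons, ihY]
      simp only [editDist_nil_left, List.length_append, List.length_cons, List.length_nil]
      omega
  | cons x X ihX =>
    induction Y with
    | nil =>
      have h := ihX []
      simp only [List.nil_append, List.cons_append, editDist_nil_right] at h ⊢
      rw [editDist_cons_cons, editDist_cons_cons, h]
      simp only [editDist_nil_right, List.length_append, List.length_cons, List.length_nil]
      omega
    | cons y Y ihY =>
      have h₁ := ihX (y :: Y)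
      have h₂ := ihX Y
      simp only [List.cons_append] at h₁ h₂ ihY ⊢
      rw [editDist_cons_cons x y (X ++ [a]), editDist_cons_cons x y X (Y ++ [b]),
        editDist_cons_cons x y (X ++ [a]) Y, editDist_cons_cons x y X Y, h₁, h₂, ihY]
      -- both sides are the minimum over the same nine paths through the corner of the grid
      simp only [min_add, add_assoc]
      ac_rfl


theorem editDist_append_singleton_left_le (X Y : List α) (a : α) :
    editDist (X ++ [a]) Y ≤ editDist X Y + 1 := by
  induction Y using List.reverseRecOn with
  | nil => simp
  | append_singleton Y b _ =>
    rw [editDist_append_singleton_append_singleton]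
    omega

theorem editDist_append_singleton_right_le (X Y : List α) (b : α) :
    editDist X (Y ++ [b]) ≤ editDist X Y + 1 := by
  rw [editDist_comm, editDist_comm X]
  exact editDist_append_singleton_left_le Y X b

theorem editDist_le_append_singleton_left (X Y : List α) (a : α) :
    editDist X Y ≤ editDist (X ++ [a]) Y + 1 := by
  induction Y using List.reverseRecOn with
  | nil =>
    simp only [editDist_nil_right, List.length_append, List.length_singleton]
    omega
  | append_singleton Y b ih =>
    have := editDist_append_singleton_right_le X Y b
    rw [editDist_append_singleton_append_singleton]
    omega

theorem editDist_le_append_singleton_right (X Y : List α) (b : α) :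
    editDist X Y ≤ editDist X (Y ++ [b]) + 1 := by
  rw [editDist_comm, editDist_comm X]
  exact editDist_le_append_singleton_left Y X b

theorem length_le_editDist_add (X Y : List α) : X.length ≤ editDist X Y + Y.length := by
  induction Y using List.reverseRecOn with
  | nil => simp
  | append_singleton Y b ih =>
    have := editDist_le_append_singleton_right X Y b
    simp only [List.length_append, List.length_singleton]
    omega

theorem length_le_editDist_add' (X Y : List α) : Y.length ≤ editDist X Y + X.length := by
  rw [editDist_comm]
  exact length_le_editDist_add Y X

theorem editDist_append_append_le (X Y Z : List α) :
    editDist (X ++ Z) (Y ++ Z) ≤ editDist X Y := by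
  induction Z using List.reverseRecOn with
  | nil => simp
  | append_singleton Z c ih =>
    rw [← List.append_assoc, ← List.append_assoc, editDist_append_singleton_append_singleton,
      if_pos rfl]
    omega

theorem editDist_append_singleton_append_singleton_le (X Y : List α) (a b : α) :
    editDist (X ++ [a]) (Y ++ [b]) ≤ editDist X Y + 1 := by
  rw [editDist_append_singleton_append_singleton]
  split_ifs <;> omega

theorem editDist_le_append_singleton_append_singleton (X Y : List α) (a b : α) :
    editDist X Y ≤ editDist (X ++ [a]) (Y ++ [b]) := by
  have := editDist_le_append_singleton_left X Y a
  have := editDist_le_append_singleton_right X Y b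
  rw [editDist_append_singleton_append_singleton]
  omega

theorem editDist_append_singleton_append_singleton_of_ne (X Y : List α) {a b : α}
    (hab : a ≠ b) :
    editDist (X ++ [a]) (Y ++ [b]) =
      min (min (editDist X (Y ++ [b])) (editDist (X ++ [a]) Y)) (editDist X Y) + 1 := by
  rw [editDist_append_singleton_append_singleton, if_neg hab]
  omega

end editDist

section lcp

variable {α : Type*} [DecidableEq α]

theorem lcp_le_length_left (X Y : List α) : lcp X Y ≤ X.length :=
  (Nat.findGreatest_le _).trans (min_le_left _ _)

theorem lcp_le_length_right (X Y : List α) : lcp X Y ≤ Y.length :=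
  (Nat.findGreatest_le _).trans (min_le_right _ _)

theorem take_lcp (X Y : List α) : X.take (lcp X Y) = Y.take (lcp X Y) :=
  Nat.findGreatest_spec (P := fun l => X.take l = Y.take l) (Nat.zero_le _) (by simp)

theorem le_lcp {X Y : List α} {k : ℕ} (hX : k ≤ X.length) (hY : k ≤ Y.length)
    (h : X.take k = Y.take k) : k ≤ lcp X Y :=
  Nat.le_findGreatest (le_min hX hY) h

end lcp

section diagSet

variable {α : Type*} [DecidableEq α] {A B : List α} {s t : ℕ} {i x : ℤ}

theorem exists_natCast_of_mem_diagSet (hx : x ∈ diagSet A B t i) :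
    ∃ u v : ℕ, x = u ∧ x - i = v := by
  obtain ⟨u, hu⟩ := Int.eq_ofNat_of_zero_le (le_of_max_le_left hx.1)
  obtain ⟨v, hv⟩ := Int.eq_ofNat_of_zero_le (sub_nonneg.2 (le_of_max_le_right hx.1))
  exact ⟨u, v, hu, hv⟩

theorem mem_diagSet_iff_of_eq {u v : ℕ} (hu : x = u) (hv : x - i = v) :
    x ∈ diagSet A B t i ↔
      u ≤ A.length ∧ v ≤ B.length ∧ editDist (A.take u) (B.take v) ≤ t := by
  have hu' : x.toNat = u := by omega
  have hv' : (x - i).toNat = v := by omega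
  simp only [diagSet, Set.mem_ofPred_eq, hu', hv']
  omega

theorem abs_le_of_mem_diagSet (hx : x ∈ diagSet A B t i) : |i| ≤ t := by
  obtain ⟨u, v, hu, hv⟩ := exists_natCast_of_mem_diagSet hx
  obtain ⟨hA, hB, hd⟩ := (mem_diagSet_iff_of_eq hu hv).1 hx
  have h₁ := length_le_editDist_add (A.take u) (B.take v)
  have h₂ := length_le_editDist_add' (A.take u) (B.take v)
  simp only [List.length_take, min_eq_left hA, min_eq_left hB] at h₁ h₂
  rw [abs_le]
  omega

theorem min_mem_diagSet_of_mem_diagSet_add_one (hi : -(B.length : ℤ) ≤ i)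
    (hx : x ∈ diagSet A B s (i + 1)) :
    min (min (A.length : ℤ) (B.length + i)) x ∈ diagSet A B (s + 1) i := by
  obtain ⟨u, v, hu, hv⟩ := exists_natCast_of_mem_diagSet hx
  obtain ⟨hA, hB, hd⟩ := (mem_diagSet_iff_of_eq hu hv).1 hx
  rcases Nat.lt_or_ge v B.length with hvB | hvB
  · rw [min_eq_right (by omega), mem_diagSet_iff_of_eq (v := v + 1) hu (by omega),
      List.take_succ_eq_append_getElem hvB]
    have := editDist_append_singleton_right_le (A.take u) (B.take v) B[v]
    exact ⟨hA, hvB, by omega⟩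
  · obtain ⟨u, rfl⟩ : ∃ u', u = u' + 1 := ⟨u - 1, by omega⟩
    rw [mem_diagSet_iff_of_eq (u := u) (v := v) (by omega) (by omega)]
    rw [List.take_succ_eq_append_getElem (by omega)] at hd
    have := editDist_le_append_singleton_left (A.take u) (B.take v) A[u]
    exact ⟨by omega, hB, by omega⟩

theorem min_mem_diagSet_of_mem_diagSet_sub_one (hi : i ≤ A.length)
    (hx : x ∈ diagSet A B s (i - 1)) :
    min (min (A.length : ℤ) (B.length + i)) (x + 1) ∈ diagSet A B (s + 1) i := by
  obtain ⟨u, v, hu, hv⟩ := exists_natCast_of_mem_diagSet hx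
  obtain ⟨hA, hB, hd⟩ := (mem_diagSet_iff_of_eq hu hv).1 hx
  rcases Nat.lt_or_ge u A.length with huA | huA
  · rw [min_eq_right (by omega), mem_diagSet_iff_of_eq (u := u + 1) (v := v) (by omega) (by omega),
      List.take_succ_eq_append_getElem huA]
    have := editDist_append_singleton_left_le (A.take u) (B.take v) A[u]
    exact ⟨huA, hB, by omega⟩
  · obtain ⟨v, rfl⟩ : ∃ v', v = v' + 1 := ⟨v - 1, by omega⟩
    rw [mem_diagSet_iff_of_eq (u := u) (v := v) (by omega) (by omega)]
    rw [List.take_succ_eq_append_getElem (by omega)] at hd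
    have := editDist_le_append_singleton_right (A.take u) (B.take v) B[v]
    exact ⟨hA, by omega, by omega⟩

theorem min_mem_diagSet_of_mem_diagSet (hx : x ∈ diagSet A B s i) :
    min (min (A.length : ℤ) (B.length + i)) (x + 1) ∈ diagSet A B (s + 1) i := by
  obtain ⟨u, v, hu, hv⟩ := exists_natCast_of_mem_diagSet hx
  obtain ⟨hA, hB, hd⟩ := (mem_diagSet_iff_of_eq hu hv).1 hx
  by_cases huv : u < A.length ∧ v < B.length
  · rw [min_eq_right (by omega),
      mem_diagSet_iff_of_eq (u := u + 1) (v := v + 1) (by omega) (by omega),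
      List.take_succ_eq_append_getElem huv.1, List.take_succ_eq_append_getElem huv.2]
    have := editDist_append_singleton_append_singleton_le (A.take u) (B.take v) A[u] B[v]
    exact ⟨huv.1, huv.2, by omega⟩
  · rw [mem_diagSet_iff_of_eq (u := u) (v := v) (by omega) (by omega)]
    exact ⟨hA, hB, by omega⟩

theorem add_lcp_mem_diagSet (hx : x ∈ diagSet A B t i) :
    x + lcp (A.drop x.toNat) (B.drop (x - i).toNat) ∈ diagSet A B t i := by
  obtain ⟨u, v, hu, hv⟩ := exists_natCast_of_mem_diagSet hx
  obtain ⟨hA, hB, hd⟩ := (mem_diagSet_iff_of_eq hu hv).1 hx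
  rw [show x.toNat = u by omega, show (x - i).toNat = v by omega]
  have hlA := lcp_le_length_left (A.drop u) (B.drop v)
  have hlB := lcp_le_length_right (A.drop u) (B.drop v)
  rw [List.length_drop] at hlA hlB
  rw [mem_diagSet_iff_of_eq (u := u + lcp (A.drop u) (B.drop v))
      (v := v + lcp (A.drop u) (B.drop v)) (by omega) (by omega),
    List.take_add, List.take_add, take_lcp]
  exact ⟨by omega, by omega, (editDist_append_append_le _ _ _).trans hd⟩

/-- A mismatch at a cell past `(u, v)` would put one of its three predecessors at distance
`≤ s`. -/
theorem take_drop_eq_of_editDist_le {u v : ℕ}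
    (hbeyond : ∀ k, u + k < A.length → v + k < B.length →
      s < editDist (A.take (u + k)) (B.take (v + k + 1)) ∧
      s < editDist (A.take (u + k + 1)) (B.take (v + k)) ∧
      s < editDist (A.take (u + k)) (B.take (v + k))) :
    ∀ k, u + k ≤ A.length → v + k ≤ B.length →
      editDist (A.take (u + k)) (B.take (v + k)) ≤ s + 1 → (A.drop u).take k = (B.drop v).take k
  | 0, _, _, _ => by simp
  | k + 1, hA, hB, hd => by
    have hA' : u + k < A.length := by omega
    have hB' : v + k < B.length := by omega
    rw [← add_assoc, ← add_assoc, List.take_succ_eq_append_getElem hA',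
      List.take_succ_eq_append_getElem hB'] at hd
    have heq : A[u + k] = B[v + k] := by
      by_contra hne
      have := hbeyond k hA' hB'
      rw [List.take_succ_eq_append_getElem hA', List.take_succ_eq_append_getElem hB'] at this
      rw [editDist_append_singleton_append_singleton_of_ne _ _ hne] at hd
      omega
    have ih := take_drop_eq_of_editDist_le hbeyond k hA'.le hB'.le
      ((editDist_le_append_singleton_append_singleton _ _ _ _).trans hd)
    rw [List.take_add_one, List.take_add_one, ih, List.getElem?_drop, List.getElem?_drop,
      List.getElem?_eq_getElem hA', List.getElem?_eq_getElem hB', heq]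

theorem le_add_lcp_of_mem_diagSet {g : ℤ} (hg : max 0 i ≤ g)
    (hbeyond : ∀ y, g ≤ y → y < min (A.length : ℤ) (B.length + i) →
      y ∉ diagSet A B s (i - 1) ∧ y + 1 ∉ diagSet A B s (i + 1) ∧ y ∉ diagSet A B s i)
    (hx : x ∈ diagSet A B (s + 1) i) :
    x ≤ g + lcp (A.drop g.toNat) (B.drop (g - i).toNat) := by
  obtain ⟨u, hu⟩ := Int.eq_ofNat_of_zero_le (le_of_max_le_left hg)
  obtain ⟨v, hv⟩ := Int.eq_ofNat_of_zero_le (sub_nonneg.2 (le_of_max_le_right hg))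
  rcases le_or_gt x g with hxg | hxg
  · omega
  obtain ⟨k, hk⟩ : ∃ k : ℕ, x = g + k := ⟨(x - g).toNat, by omega⟩
  obtain ⟨hA, hB, hd⟩ :=
    (mem_diagSet_iff_of_eq (u := u + k) (v := v + k) (by omega) (by omega)).1 hx
  have htake := take_drop_eq_of_editDist_le (fun j hAj hBj => ?_) k hA hB hd
  · have := le_lcp (by rw [List.length_drop]; omega) (by rw [List.length_drop]; omega) htake
    rw [show g.toNat = u by omega, show (g - i).toNat = v by omega]
    omega
  · obtain ⟨h₁, h₂, h₃⟩ := hbeyond (g + j) (by omega) (by omega)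
    rw [mem_diagSet_iff_of_eq (u := u + j) (v := v + j + 1) (by omega) (by omega)] at h₁
    rw [mem_diagSet_iff_of_eq (u := u + j + 1) (v := v + j) (by omega) (by omega)] at h₂
    rw [mem_diagSet_iff_of_eq (u := u + j) (v := v + j) (by omega) (by omega)] at h₃
    omega

end diagSet

/-- Correctness of the Landau–Vishkin frontier recurrence: given the frontiers
`f(t-1, i+1) = c₁`, `f(t-1, i-1) = c₂ - 1` and `f(t-1, i) = c₃ - 1` on the applicable
neighboring diagonals, at least one candidate is applicable, and letting `gmax` be the maximum
of the applicable candidates and `g = min(min(n, m+i), gmax)`, the set `S_t(i)` is nonempty with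
maximum `f(t, i) = g + lcp(A.drop g, B.drop (g - i))`. -/
theorem landau_vishkin_step {α : Type*} [DecidableEq α] (A B : List α) (t : ℕ) (ht : 1 ≤ t)
    (i : ℤ) (hit : |i| ≤ (t : ℤ)) (him : -(B.length : ℤ) ≤ i) (hin : i ≤ (A.length : ℤ))
    (c₁ c₂ c₃ : ℤ)
    (h₁ : |i + 1| ≤ (t : ℤ) - 1 → i + 1 ≤ (A.length : ℤ) →
      IsGreatest (diagSet A B (t - 1) (i + 1)) c₁)
    (h₂ : |i - 1| ≤ (t : ℤ) - 1 → -(B.length : ℤ) ≤ i - 1 →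
      IsGreatest (diagSet A B (t - 1) (i - 1)) (c₂ - 1))
    (h₃ : |i| ≤ (t : ℤ) - 1 → IsGreatest (diagSet A B (t - 1) i) (c₃ - 1)) :
    ((|i + 1| ≤ (t : ℤ) - 1 ∧ i + 1 ≤ (A.length : ℤ)) ∨
     (|i - 1| ≤ (t : ℤ) - 1 ∧ -(B.length : ℤ) ≤ i - 1) ∨
     |i| ≤ (t : ℤ) - 1) ∧
    ∀ gmax : ℤ,
      IsGreatest {c : ℤ |
        ((|i + 1| ≤ (t : ℤ) - 1 ∧ i + 1 ≤ (A.length : ℤ)) ∧ c = c₁) ∨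
        ((|i - 1| ≤ (t : ℤ) - 1 ∧ -(B.length : ℤ) ≤ i - 1) ∧ c = c₂) ∨
        (|i| ≤ (t : ℤ) - 1 ∧ c = c₃)} gmax →
      letI g : ℤ := min (min (A.length : ℤ) ((B.length : ℤ) + i)) gmax
      IsGreatest (diagSet A B t i)
        (g + (lcp (A.drop g.toNat) (B.drop (g - i).toNat) : ℤ)) := by
  refine ⟨by simp only [abs_le] at hit ⊢; omega, fun gmax ⟨hmem, hub⟩ => ?_⟩
  obtain ⟨s, rfl⟩ : ∃ s, t = s + 1 := ⟨t - 1, by omega⟩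
  simp only [Nat.add_sub_cancel, Nat.cast_add, Nat.cast_one, add_sub_cancel_right]
    at h₁ h₂ h₃ hmem hub
  have hg : min (min (A.length : ℤ) (B.length + i)) gmax ∈ diagSet A B (s + 1) i := by
    rcases hmem with ⟨⟨habs, hdom⟩, rfl⟩ | ⟨⟨habs, hdom⟩, rfl⟩ | ⟨habs, rfl⟩
    · exact min_mem_diagSet_of_mem_diagSet_add_one him (h₁ habs hdom).1
    · simpa using min_mem_diagSet_of_mem_diagSet_sub_one hin (h₂ habs hdom).1
    · simpa using min_mem_diagSet_of_mem_diagSet (h₃ habs).1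
  refine ⟨add_lcp_mem_diagSet hg,
    fun x hx => le_add_lcp_of_mem_diagSet hg.1 (fun y hgy hy => ?_) hx⟩
  -- `y` lies strictly inside the diagonal, so the clipping is inactive there
  have hgmax : gmax ≤ y := by omega
  refine ⟨fun h => ?_, fun h => ?_, fun h => ?_⟩
  · have happ : -(B.length : ℤ) ≤ i - 1 := by have := h.1; have := h.2.1; omega
    have := (h₂ (abs_le_of_mem_diagSet h) happ).2 h
    have := hub (Or.inr (Or.inl ⟨⟨abs_le_of_mem_diagSet h, happ⟩, rfl⟩))
    omega
  · have happ : i + 1 ≤ (A.length : ℤ) := by have := h.1; have := h.2.1; omega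
    have := (h₁ (abs_le_of_mem_diagSet h) happ).2 h
    have := hub (Or.inl ⟨⟨abs_le_of_mem_diagSet h, happ⟩, rfl⟩)
    omega
  · have := (h₃ (abs_le_of_mem_diagSet h)).2 h
    have := hub (Or.inr (Or.inr ⟨abs_le_of_mem_diagSet h, rfl⟩))
    omega
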